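/- arXiv:2002.07826 — 2 statements merged into one kernel-verified Lean document; each statement's English description precedes it below -/
import Mathlib

section
/- Let C be a linear [n,k]_q code with generator matrix G ∈ F_q^{k×n} of rank k, and let a, b ∈ F_q^k. Suppose ψ = (M_ψ, β) is a semimonomial transformation of F_q^{n+1} with M_ψ = [[M1, 0],[0, μ]], M1 ∈ Mon_n(F_q), μ ∈ F_q^*, mapping the code generated by (G | a^T) onto the code generated by (G | b^T). Then (μ^{-1} M1, β) ∈ Aut(C), and, writing A' ∈ GL(k, F_q) for the matrix with (G μ^{-1} M1)^β = A' G, one has a^T = (A' b^T)^{β^{-1}}; i.e., a^T and b^T lie in the same orbit under the action of Im(f) on F_q^k given by (A, γ)(x) = (A x^T)^{γ^{-1}}, where f(M, α) = (A_φ, α) is determined by (G M)^α = A_φ G for (M, α) ∈ Aut(C). -/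
open Matrix

variable {F : Type*} [Field F]

/-- A monomial matrix: a product `D * P` of an invertible diagonal matrix and a
permutation matrix. -/
def IsMonomial {n : Type*} [Fintype n] [DecidableEq n] (M : Matrix n n F) : Prop :=
  ∃ (d : n → Fˣ) (P : Equiv.Perm n),
    M = Matrix.diagonal (fun i => (d i : F)) * P.permMatrix F

/-- The semimonomial transformation `(M, α)` acting by `v ↦ (v M)^α`. -/
def semiMap {n : Type*} [Fintype n] (M : Matrix n n F) (α : F ≃+* F) (v : n → F) : n → F :=
  fun j => α (Matrix.vecMul v M j)

/-- The row space of a matrix. -/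
def rowSpan {k n : Type*} (G : Matrix k n F) : Submodule F (n → F) :=
  Submodule.span F (Set.range fun i => G i)

/-- The matrix `(G | aᵀ)` obtained from `G` by appending the column `aᵀ`. -/
def appendCol {k n : Type*} (G : Matrix k n F) (a : k → F) : Matrix k (n ⊕ Unit) F :=
  Matrix.of fun i => Sum.elim (G i) (fun _ => a i)

/-!
Write `ψ(G | aᵀ)` for the matrix whose rows are the images of the rows of `(G | aᵀ)`; it equals
`((G M1)^β | β(μ aᵀ))`. Its rows lie in the row space of `(G | bᵀ)`, so `ψ(G | aᵀ) = X (G | bᵀ)`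
for some `X`, i.e. `X G = (G M1)^β` and `X bᵀ = β(μ aᵀ)`. Then `A' = β(μ⁻¹) X` satisfies both
identities of the theorem, and it is invertible because `A' G = (G μ⁻¹ M1)^β` has independent
rows. Consequently `(μ⁻¹ M1, β)` maps `C`, the row space of `G`, onto the row space of `A' G`,
which is `C` again.
-/

namespace IsMonomial

variable {n : Type*} [Fintype n] [DecidableEq n] {M : Matrix n n F}

theorem units_smul (hM : IsMonomial M) (u : Fˣ) : IsMonomial ((u : F) • M) := by
  obtain ⟨d, P, rfl⟩ := hM
  refine ⟨u • d, P, ?_⟩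
  rw [← Matrix.smul_mul, ← diagonal_smul]
  rfl

theorem isUnit (hM : IsMonomial M) : IsUnit M := by
  obtain ⟨d, P, rfl⟩ := hM
  refine (isUnit_diagonal.2 (Pi.isUnit_iff.2 fun i => (d i).isUnit)).mul ?_
  simpa using (Group.isUnit P⁻¹).map (Matrix.permMatrixHom (R := F))

end IsMonomial

section

variable {R S : Type*} [NonAssocSemiring R] [NonAssocSemiring S] {k m n : Type*} [Fintype k]

theorem Matrix.linearIndependent_row_of_rank_eq_card [Fintype n] {A : Matrix k n F}
    (h : A.rank = Fintype.card k) : LinearIndependent F A.row := by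
  rw [linearIndependent_iff_card_eq_finrank_span, Set.finrank, ← A.rank_eq_finrank_span_row, h]

theorem Matrix.isUnit_of_vecMul_mul_injective [DecidableEq k] {A : Matrix k k F}
    {B : Matrix k n F} (h : Function.Injective (A * B).vecMul) : IsUnit A := by
  refine vecMul_injective_iff_isUnit.1 (Function.Injective.of_comp (f := fun v => v ᵥ* B) ?_)
  simpa only [Function.comp_def, vecMul_vecMul] using h

theorem Matrix.vecMul_map_ringEquiv (e : R ≃+* S) (A : Matrix k n R) (x : k → S) :
    x ᵥ* A.map e = e ∘ ((e.symm ∘ x) ᵥ* A) := by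
  funext j
  have := RingHom.map_vecMul (e : R →+* S) A (e.symm ∘ x) j
  simp only [RingEquiv.coe_toRingHom] at this
  rw [Function.comp_apply, this]
  congr 2
  funext i
  simp

theorem Matrix.vecMul_injective_map_ringEquiv (e : R ≃+* S) {A : Matrix k n R}
    (hA : Function.Injective A.vecMul) : Function.Injective (A.map e).vecMul := by
  intro x y h
  simp only [vecMul_map_ringEquiv] at h
  exact e.symm.injective.comp_left (hA (e.injective.comp_left h))

theorem mem_rowSpan_iff {A : Matrix k n F} {v : n → F} : v ∈ rowSpan A ↔ ∃ x, x ᵥ* A = v := by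
  rw [rowSpan, ← A.row_def, ← range_vecMulLinear]
  rfl

theorem rowSpan_mul_le (A : Matrix m k F) (B : Matrix k n F) : rowSpan (A * B) ≤ rowSpan B :=
  Submodule.span_le.2 <| Set.range_subset_iff.2 fun i => mem_rowSpan_iff.2 ⟨A i, rfl⟩

theorem rowSpan_mul_of_isUnit [DecidableEq k] {A : Matrix k k F} (hA : IsUnit A)
    (B : Matrix k n F) : rowSpan (A * B) = rowSpan B := by
  obtain ⟨u, rfl⟩ := hA
  refine (rowSpan_mul_le _ _).antisymm ?_
  have := rowSpan_mul_le ((u⁻¹ : (Matrix k k F)ˣ) : Matrix k k F) ((u : Matrix k k F) * B)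
  rwa [← Matrix.mul_assoc, Units.inv_mul, Matrix.one_mul] at this

theorem exists_mul_eq_of_rowSpan_le {A : Matrix k n F} {B : Matrix m n F}
    (h : rowSpan B ≤ rowSpan A) : ∃ X : Matrix m k F, X * A = B := by
  choose X hX using fun i => mem_rowSpan_iff.1 (h (Submodule.subset_span ⟨i, rfl⟩))
  exact ⟨X, Matrix.ext fun i j => congrFun (hX i) j⟩

end

section

variable {R α β : Type*} {k m n : Type*}

theorem appendCol_eq_fromCols (G : Matrix k n α) (a : k → α) :
    appendCol G a = fromCols G (replicateCol Unit a) :=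
  rfl

theorem appendCol_inj {G G' : Matrix k n α} {a a' : k → α} :
    appendCol G a = appendCol G' a' ↔ G = G' ∧ a = a' := by
  simp only [appendCol_eq_fromCols, fromCols_ext_iff, replicateCol_inj]

theorem map_appendCol (G : Matrix k n α) (a : k → α) (f : α → β) :
    (appendCol G a).map f = appendCol (G.map f) (f ∘ a) := by
  ext i (j | _) <;> rfl

theorem mul_appendCol [NonUnitalNonAssocSemiring R] [Fintype k] (X : Matrix m k R)
    (G : Matrix k n R) (b : k → R) : X * appendCol G b = appendCol (X * G) (X *ᵥ b) := by
  ext i (j | _) <;> rfl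

theorem appendCol_mul_fromBlocks [NonUnitalNonAssocSemiring R] [Fintype n] (G : Matrix k n R)
    (a : k → R) (M : Matrix n n R) (μ : R) :
    appendCol G a * fromBlocks M 0 0 (of fun _ _ => μ : Matrix Unit Unit R) =
      appendCol (G * M) (fun i => a i * μ) := by
  ext i (j | _) <;> simp [appendCol_eq_fromCols, mul_apply]

end

section

variable {k n : Type*} [Fintype k] [Fintype n]

theorem semiMap_vecMul (M : Matrix n n F) (β : F ≃+* F) (A : Matrix k n F) (x : k → F) :
    semiMap M β (x ᵥ* A) = (β ∘ x) ᵥ* (A * M).map β := by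
  funext j
  rw [semiMap, vecMul_vecMul]
  exact RingHom.map_vecMul (β : F →+* F) (A * M) x j

theorem image_semiMap_rowSpan (M : Matrix n n F) (β : F ≃+* F) (A : Matrix k n F) :
    semiMap M β '' (rowSpan A : Set (n → F)) = rowSpan ((A * M).map β) := by
  ext v
  simp only [Set.mem_image, SetLike.mem_coe, mem_rowSpan_iff]
  constructor
  · rintro ⟨_, ⟨x, rfl⟩, rfl⟩
    exact ⟨β ∘ x, (semiMap_vecMul M β A x).symm⟩
  · rintro ⟨y, rfl⟩
    refine ⟨_, ⟨β.symm ∘ y, rfl⟩, ?_⟩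
    rw [semiMap_vecMul]
    congr 1
    funext i
    simp

theorem exists_mul_eq_of_image_rowSpan_appendCol {G : Matrix k n F} {a b : k → F}
    {M : Matrix n n F} {μ : F} {β : F ≃+* F}
    (h : semiMap (fromBlocks M 0 0 (of fun _ _ => μ)) β '' (rowSpan (appendCol G a) : Set _) =
      (rowSpan (appendCol G b) : Set (n ⊕ Unit → F))) :
    ∃ X : Matrix k k F, X * G = (G * M).map β ∧ X *ᵥ b = fun i => β (a i * μ) := by
  rw [image_semiMap_rowSpan, appendCol_mul_fromBlocks, map_appendCol] at h
  obtain ⟨X, hX⟩ := exists_mul_eq_of_rowSpan_le (SetLike.coe_subset_coe.1 h.le)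
  rw [mul_appendCol, appendCol_inj] at hX
  exact ⟨X, hX⟩

end

theorem stmt4_general {n k : ℕ}
    (C : Submodule F (Fin n → F)) (G : Matrix (Fin k) (Fin n) F)
    (hG : rowSpan G = C) (hrank : G.rank = k)
    (a b : Fin k → F)
    (M1 : Matrix (Fin n) (Fin n) F) (μ : Fˣ) (β : F ≃+* F)
    (hM1 : IsMonomial M1)
    (hmap : semiMap (Matrix.fromBlocks M1 0 0 (Matrix.of fun _ _ => (μ : F))) β ''
        (rowSpan (appendCol G a) : Set ((Fin n ⊕ Unit) → F)) =
        (rowSpan (appendCol G b) : Set ((Fin n ⊕ Unit) → F))) :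
    (IsMonomial (((μ : F)⁻¹) • M1) ∧
      semiMap (((μ : F)⁻¹) • M1) β '' (C : Set (Fin n → F)) = (C : Set (Fin n → F))) ∧
    ∃ A' : Matrix (Fin k) (Fin k) F, IsUnit A' ∧
      (G * (((μ : F)⁻¹) • M1)).map ⇑β = A' * G ∧
      a = fun i => β.symm ((A' *ᵥ b) i) := by
  obtain ⟨X, hXG, hXb⟩ := exists_mul_eq_of_image_rowSpan_appendCol hmap
  have hmono : IsMonomial ((μ : F)⁻¹ • M1) := by
    simpa only [Units.val_inv_eq_inv_val] using hM1.units_smul μ⁻¹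
  have hG_inj : Function.Injective G.vecMul := by
    rw [vecMul_injective_iff]
    exact linearIndependent_row_of_rank_eq_card (by rw [hrank, Fintype.card_fin])
  set A' := β (μ : F)⁻¹ • X
  have hA'G : (G * ((μ : F)⁻¹ • M1)).map β = A' * G := by
    rw [Matrix.mul_smul, Matrix.map_smulₛₗ β β _ (map_mul β _), ← hXG, Matrix.smul_mul]
  have hA' : IsUnit A' := by
    refine isUnit_of_vecMul_mul_injective (B := G) ?_
    rw [← hA'G]
    refine vecMul_injective_map_ringEquiv β ?_
    have hN_inj := vecMul_injective_iff_isUnit.2 hmono.isUnit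
    simpa only [Function.comp_def, vecMul_vecMul] using hN_inj.comp hG_inj
  refine ⟨⟨hmono, ?_⟩, A', hA', hA'G, ?_⟩
  · rw [← hG, image_semiMap_rowSpan, hA'G, rowSpan_mul_of_isUnit hA']
  · funext i
    rw [smul_mulVec, hXb, Pi.smul_apply, smul_eq_mul, ← map_mul, RingEquiv.symm_apply_apply]
    field_simp

/-- Let `C` have generator matrix `G` of rank `k` and let `ψ = ([[M1,0],[0,μ]], β)` be a
semimonomial transformation mapping the code generated by `(G | aᵀ)` onto the code
generated by `(G | bᵀ)`.  Then `(μ⁻¹ M1, β) ∈ Aut(C)` and, for the matrix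
`A' ∈ GL(k, F_q)` with `(G μ⁻¹ M1)^β = A' G`, one has `aᵀ = (A' bᵀ)^{β⁻¹}`; i.e. `aᵀ`
and `bᵀ` lie in the same orbit under the action `(A, γ)(x) = (A xᵀ)^{γ⁻¹}` of `Im(f)`. -/
theorem stmt4 [Fintype F] {n k : ℕ}
    (C : Submodule F (Fin n → F)) (G : Matrix (Fin k) (Fin n) F)
    (hG : rowSpan G = C) (hrank : G.rank = k)
    (a b : Fin k → F)
    (M1 : Matrix (Fin n) (Fin n) F) (μ : Fˣ) (β : F ≃+* F)
    (hM1 : IsMonomial M1)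
    (hmap : semiMap (Matrix.fromBlocks M1 0 0 (Matrix.of fun _ _ => (μ : F))) β ''
        (rowSpan (appendCol G a) : Set ((Fin n ⊕ Unit) → F)) =
        (rowSpan (appendCol G b) : Set ((Fin n ⊕ Unit) → F))) :
    (IsMonomial (((μ : F)⁻¹) • M1) ∧
      semiMap (((μ : F)⁻¹) • M1) β '' (C : Set (Fin n → F)) = (C : Set (Fin n → F))) ∧
    ∃ A' : Matrix (Fin k) (Fin k) F, IsUnit A' ∧
      (G * (((μ : F)⁻¹) • M1)).map ⇑β = A' * G ∧
      a = fun i => β.symm ((A' *ᵥ b) i) :=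
  stmt4_general C G hG hrank a b M1 μ β hM1 hmap
end

section
/- Let W ⊆ ℕ_{≥1} and let C' be a linear [n',k']_q code of effective length n', all of whose nonzero codewords have Hamming weight in W, and let r be the minimum column multiplicity of a generator matrix of C'. Then there exists a linear code C of effective length n'−r and dimension k'−1, all of whose nonzero codewords have weight in W and whose minimum column multiplicity is at least r, such that C' is equivalent to the code generated by a block matrix [[Ĝ, 0],[a, 1⋯1]], where Ĝ is a generator matrix of C, a ∈ F_q^{n'−r}, and the last block consists of r columns. -/
open Matrix

variable {F : Type*} [Field F]

/-- The multiplicity of the column `j0` of `G`: the number of columns of `G` whose span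
equals the span of column `j0`. -/
noncomputable def colMult {m n : Type*} [Fintype n] (G : Matrix m n F) (j0 : n) : ℕ :=
  Nat.card {j : n // Submodule.span F {fun i => G i j} =
    Submodule.span F {fun i => G i j0}}

/-- A semimonomial transformation (coordinate relabeling `e`, nonzero scalars `d`, field
automorphism `α`). -/
def monMap {n1 n2 : Type*} (e : n1 ≃ n2) (d : n2 → Fˣ) (α : F ≃+* F) (v : n1 → F) :
    n2 → F :=
  fun j => α ((d j : F) * v (e.symm j))

/-- Two linear codes are equivalent if some semimonomial transformation maps one onto
the other. -/
def CodeEquivR {n1 n2 : Type*} (C1 : Submodule F (n1 → F)) (C2 : Submodule F (n2 → F)) :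
    Prop :=
  ∃ (e : n1 ≃ n2) (d : n2 → Fˣ) (α : F ≃+* F),
    monMap e d α '' (C1 : Set (n1 → F)) = (C2 : Set (n2 → F))

/-- The block matrix `[[G, 0], [a, 1⋯1]]` with `r` columns in the last block. -/
def extBlock {k m r : ℕ} (Gres : Matrix (Fin k) (Fin m) F) (a : Fin m → F) :
    Matrix (Fin k ⊕ Unit) (Fin m ⊕ Fin r) F :=
  Matrix.fromBlocks Gres 0 (Matrix.of fun _ j => a j) (Matrix.of fun _ _ => (1 : F))

/-!
Fix a column `j₀` of minimum multiplicity `r` and let `S` be its class of proportional columns.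
On `C'` every coordinate in `S` is a fixed nonzero multiple of the coordinate `j₀`, so the
shortened code `K = {c ∈ C' | c j₀ = 0}`, of dimension `k' - 1`, vanishes on all of `S`.
Deleting the coordinates in `S` is therefore injective and weight-preserving on `K`; its image `C`
has effective length `n' - r`, because a column outside `S` is not proportional to column `j₀`,
so some codeword of `K` is nonzero there. The class of a column outside `S` lies outside `S`
and survives the deletion, so multiplicities do not drop below `r`. Finally `C' = K ⊕ ⟨c₀⟩` for a
codeword with `c₀ j₀ = 1`, and rescaling each coordinate of `S` to agree with coordinate `j₀` on
`C'` turns a generator matrix of `K ⊕ ⟨c₀⟩` into `[[Ĝ, 0], [a, 1⋯1]]`.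
-/

lemma exists_sumEquiv_fin_of_card_eq {n r : ℕ} (s : Set (Fin n)) (hs : Nat.card s = r) :
    ∃ e : Fin (n - r) ⊕ Fin r ≃ Fin n,
      Set.range (e ∘ Sum.inl) = sᶜ ∧ ∀ t, e (.inr t) ∈ s := by
  classical
  have hsc : Nat.card ↥sᶜ = n - r := by
    rw [Nat.card_coe_set_eq, Set.ncard_compl, ← Nat.card_coe_set_eq, hs,
      Nat.card_eq_fintype_card, Fintype.card_fin]
  let eC := Finite.equivFinOfCardEq hsc
  let e := (Equiv.sumCongr eC.symm (Finite.equivFinOfCardEq hs).symm).trans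
    ((Equiv.sumComm _ _).trans (Equiv.Set.sumCompl s))
  refine ⟨e, ?_, fun t => by simp [e]⟩
  ext j
  simp only [e, Equiv.coe_trans, Function.comp_apply, Equiv.sumCongr_apply, Sum.map_inl,
    Equiv.sumComm_apply, Sum.swap_inl, Equiv.Set.sumCompl_apply_inr, Set.mem_range,
    Set.mem_compl_iff]
  exact ⟨fun ⟨y, hy⟩ => hy ▸ (eC.symm y).2, fun hj => ⟨eC ⟨j, hj⟩, by simp⟩⟩

section RowSpan

variable {k m n : Type*}

lemma rowSpan_map {n₂ : Type*} (f : (n → F) →ₗ[F] (n₂ → F)) (G : Matrix k n F) :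
    (rowSpan G).map f = rowSpan (Matrix.of fun i => f (G i)) := by
  rw [rowSpan, rowSpan, Submodule.map_span, ← Set.range_comp]
  rfl

lemma rowSpan_submatrix (G : Matrix k n F) (σ : m → n) :
    rowSpan (G.submatrix id σ) = (rowSpan G).map (LinearMap.funLeft F F σ) := by
  rw [rowSpan_map]
  rfl

lemma rowSpan_fromRows {k₂ : Type*} (A : Matrix k n F) (B : Matrix k₂ n F) :
    rowSpan (Matrix.fromRows A B) = rowSpan A ⊔ rowSpan B := by
  rw [rowSpan, rowSpan, rowSpan, ← Submodule.span_union]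
  congr 1
  ext v
  simp only [Set.mem_range, Sum.exists, Set.mem_union]
  rfl

lemma rowSpan_replicateRow (v : n → F) : rowSpan (Matrix.replicateRow Unit v) = F ∙ v := by
  change Submodule.span F (Set.range fun _ : Unit => v) = _
  rw [Set.range_const]

lemma exists_rowSpan_eq_of_finrank_eq [Finite n] (K : Submodule F (n → F)) {r : ℕ}
    (h : Module.finrank F K = r) : ∃ B : Matrix (Fin r) n F, rowSpan B = K := by
  let b := Module.finBasisOfFinrankEq F K h
  refine ⟨fun i => b i, ?_⟩
  have := congrArg (Submodule.map K.subtype) b.span_eq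
  rwa [Submodule.map_span, Submodule.map_top, Submodule.range_subtype, ← Set.range_comp] at this

lemma apply_eq_mul_of_col_eq_smul {G : Matrix k n F} {j j' : n} {a : F} (h : Gᵀ j' = a • Gᵀ j)
    {c : n → F} (hc : c ∈ rowSpan G) : c j' = a * c j := by
  have : rowSpan G ≤ LinearMap.ker (LinearMap.proj j' - a • LinearMap.proj j) := by
    rw [rowSpan, Submodule.span_le]
    rintro _ ⟨i, rfl⟩
    simpa [sub_eq_zero] using congrFun h i
  simpa [sub_eq_zero] using this hc

lemma col_ne_zero_of_apply_ne_zero {G : Matrix k n F} {j : n} {c : n → F} (hc : c ∈ rowSpan G)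
    (hcj : c j ≠ 0) : Gᵀ j ≠ 0 := fun h0 =>
  hcj (by simpa using apply_eq_mul_of_col_eq_smul (j := j) (j' := j) (a := 0) (by simp [h0]) hc)

lemma exists_mem_rowSpan_apply_eq_zero_of_col_notMem [Fintype k] {G : Matrix k n F} {j j' : n}
    (h : Gᵀ j' ∉ F ∙ Gᵀ j) : ∃ c ∈ rowSpan G, c j = 0 ∧ c j' ≠ 0 := by
  classical
  obtain ⟨φ, hφj', hφj⟩ := Submodule.exists_dual_map_eq_bot_of_notMem h inferInstance
  -- the functional `φ` on the column space becomes the codeword `l ↦ φ (Gᵀ l)`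
  have hφ_apply : ∀ l, (∑ i, φ (Pi.single i 1) • G i) l = φ (Gᵀ l) := by
    intro l
    rw [LinearMap.pi_apply_eq_sum_univ φ (Gᵀ l)]
    simp only [Finset.sum_apply, Pi.smul_apply, smul_eq_mul, mul_comm]
    refine Finset.sum_congr rfl fun i _ => ?_
    congr 2
    ext j
    simp [Pi.single_apply, eq_comm]
  refine ⟨_, Submodule.sum_mem _ fun i _ =>
    Submodule.smul_mem _ _ (Submodule.subset_span ⟨i, rfl⟩), ?_, by rwa [hφ_apply]⟩
  rw [hφ_apply]
  have := Submodule.mem_map_of_mem (f := φ) (Submodule.mem_span_singleton_self (Gᵀ j))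
  rwa [hφj, Submodule.mem_bot] at this

end RowSpan

section ColClass

variable {k m n : Type*}

def colClass (G : Matrix k n F) (j : n) : Set n :=
  {j' | F ∙ Gᵀ j' = F ∙ Gᵀ j}

lemma colClass_subset_compl {G : Matrix k n F} {j j₀ : n} (hj : j ∉ colClass G j₀) :
    colClass G j ⊆ (colClass G j₀)ᶜ := fun _ h₁ h₂ => hj (h₁.symm.trans h₂)

lemma exists_unit_apply_eq_of_mem_colClass {G : Matrix k n F} {j j' : n}
    (h : j' ∈ colClass G j) : ∃ u : Fˣ, ∀ c ∈ rowSpan G, c j' = u * c j := by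
  obtain ⟨u, hu⟩ := Submodule.span_singleton_eq_span_singleton.mp h.symm
  exact ⟨u, fun c hc => apply_eq_mul_of_col_eq_smul hu.symm hc⟩

lemma col_notMem_span_of_notMem_colClass {G : Matrix k n F} {j j₀ : n}
    (hj : j ∉ colClass G j₀) (hcol : Gᵀ j ≠ 0) : Gᵀ j ∉ F ∙ Gᵀ j₀ := by
  intro hmem
  obtain ⟨a, ha⟩ := Submodule.mem_span_singleton.mp hmem
  have ha₀ : a ≠ 0 := by
    rintro rfl
    exact hcol (by simpa using ha.symm)
  exact hj (by rw [colClass, Set.mem_ofPred_eq, ← ha,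
    Submodule.span_singleton_smul_eq (IsUnit.mk0 a ha₀)])

lemma colMult_le_colMult_submatrix [Fintype n] [Fintype m] {k₂ : Type*} {G : Matrix k n F}
    {B : Matrix k₂ n F} (hB : rowSpan B ≤ rowSpan G) {σ : m → n}
    (hσ : Function.Injective σ) {j : m} (hj : colClass G (σ j) ⊆ Set.range σ) :
    colMult G (σ j) ≤ colMult (B.submatrix id σ) j := by
  have hsub : colClass G (σ j) ⊆ σ '' colClass (B.submatrix id σ) j := by
    intro j' hj'
    obtain ⟨a, rfl⟩ := hj hj'
    obtain ⟨u, hu⟩ := exists_unit_apply_eq_of_mem_colClass hj'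
    have hcol : (B.submatrix id σ)ᵀ a = (u : F) • (B.submatrix id σ)ᵀ j :=
      funext fun i => hu (B i) (hB (Submodule.subset_span ⟨i, rfl⟩))
    refine ⟨a, ?_, rfl⟩
    rw [colClass, Set.mem_ofPred_eq, hcol, Submodule.span_singleton_smul_eq u.isUnit]
  calc colMult G (σ j) = Nat.card (colClass G (σ j)) := rfl
    _ ≤ Nat.card (σ '' colClass (B.submatrix id σ) j) := Nat.card_mono (Set.toFinite _) hsub
    _ = colMult (B.submatrix id σ) j := Nat.card_image_of_injective hσ _

end ColClass

section Shortening

variable {n : Type*}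

def shortening (C : Submodule F (n → F)) (j : n) : Submodule F (n → F) :=
  C ⊓ LinearMap.ker (LinearMap.proj j)

lemma mem_shortening {C : Submodule F (n → F)} {j : n} {c : n → F} :
    c ∈ shortening C j ↔ c ∈ C ∧ c j = 0 := by
  simp [shortening]

lemma shortening_sup_span_singleton {C : Submodule F (n → F)} {j : n} {c₀ : n → F}
    (hc₀ : c₀ ∈ C) (hc₀j : c₀ j ≠ 0) : shortening C j ⊔ F ∙ c₀ = C := by
  refine le_antisymm (sup_le inf_le_left ((Submodule.span_singleton_le_iff_mem _ _).2 hc₀)) ?_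
  intro c hc
  have hs : c - (c j / c₀ j) • c₀ ∈ shortening C j :=
    mem_shortening.2
      ⟨sub_mem hc (Submodule.smul_mem _ _ hc₀), by simp [div_mul_cancel₀ _ hc₀j]⟩
  rw [← sub_add_cancel c ((c j / c₀ j) • c₀)]
  exact add_mem (Submodule.mem_sup_left hs)
    (Submodule.mem_sup_right (Submodule.smul_mem _ _ (Submodule.mem_span_singleton_self c₀)))

lemma finrank_shortening_add_one [Finite n] {C : Submodule F (n → F)} {j : n} {c₀ : n → F}
    (hc₀ : c₀ ∈ C) (hc₀j : c₀ j ≠ 0) :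
    Module.finrank F (shortening C j) + 1 = Module.finrank F C := by
  have hdisj : shortening C j ⊓ F ∙ c₀ = ⊥ := by
    rw [Submodule.eq_bot_iff]
    rintro c ⟨hc, hc'⟩
    obtain ⟨a, rfl⟩ := Submodule.mem_span_singleton.mp hc'
    have : a * c₀ j = 0 := (mem_shortening.1 hc).2
    simp [(mul_eq_zero.1 this).resolve_right hc₀j]
  have := Submodule.finrank_sup_add_finrank_inf_eq (shortening C j) (F ∙ c₀)
  rwa [shortening_sup_span_singleton hc₀ hc₀j, hdisj, finrank_bot, add_zero,
    finrank_span_singleton (fun h => hc₀j (by simp [h])), eq_comm] at this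

end Shortening

lemma hammingNorm_comp_of_apply_eq_zero {ι κ β : Type*} [Fintype ι] [Fintype κ] [Zero β]
    [DecidableEq β] {σ : κ → ι} (hσ : Function.Injective σ) {c : ι → β}
    (hc : ∀ i ∉ Set.range σ, c i = 0) : hammingNorm (c ∘ σ) = hammingNorm c := by
  refine Finset.card_nbij σ (fun a ha => by simpa using ha) hσ.injOn fun i hi => ?_
  obtain ⟨a, rfl⟩ : i ∈ Set.range σ := by_contra fun h => (Finset.mem_filter.1 hi).2 (hc i h)
  exact ⟨a, by simpa using hi, rfl⟩

section Puncturing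

variable {k m n : Type*} {G : Matrix k n F} {j₀ : n} {σ : m → n}

lemma apply_eq_zero_of_mem_shortening_of_mem_colClass {j : n} {c : n → F}
    (hc : c ∈ shortening (rowSpan G) j₀) (hj : j ∈ colClass G j₀) : c j = 0 := by
  obtain ⟨u, hu⟩ := exists_unit_apply_eq_of_mem_colClass hj
  obtain ⟨hc, hcj₀⟩ := mem_shortening.1 hc
  rw [hu c hc, hcj₀, mul_zero]

lemma exists_mem_shortening_apply_ne_zero [Fintype k] {j : n} (hj : j ∉ colClass G j₀)
    (h : ∃ c ∈ rowSpan G, c j ≠ 0) : ∃ c ∈ shortening (rowSpan G) j₀, c j ≠ 0 := by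
  obtain ⟨c', hc', hc'j⟩ := h
  obtain ⟨c, hc, hcj₀, hcj⟩ := exists_mem_rowSpan_apply_eq_zero_of_col_notMem
    (col_notMem_span_of_notMem_colClass hj (col_ne_zero_of_apply_ne_zero hc' hc'j))
  exact ⟨c, mem_shortening.2 ⟨hc, hcj₀⟩, hcj⟩

variable [Fintype m] [Fintype n]

lemma hammingNorm_comp_of_mem_shortening [DecidableEq F] (hσ : Function.Injective σ)
    (hrange : (colClass G j₀)ᶜ ⊆ Set.range σ) {c : n → F}
    (hc : c ∈ shortening (rowSpan G) j₀) : hammingNorm (c ∘ σ) = hammingNorm c :=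
  hammingNorm_comp_of_apply_eq_zero hσ fun _ hj =>
    apply_eq_zero_of_mem_shortening_of_mem_colClass hc (not_not.1 (mt (@hrange _) hj))

lemma finrank_map_funLeft_shortening (hσ : Function.Injective σ)
    (hrange : (colClass G j₀)ᶜ ⊆ Set.range σ) :
    Module.finrank F ((shortening (rowSpan G) j₀).map (LinearMap.funLeft F F σ)) =
      Module.finrank F (shortening (rowSpan G) j₀) := by
  classical
  set K := shortening (rowSpan G) j₀
  have hinj : Function.Injective ((LinearMap.funLeft F F σ).comp K.subtype) := by
    rw [← LinearMap.ker_eq_bot, LinearMap.ker_eq_bot']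
    intro c hc
    apply Subtype.ext
    rw [Submodule.coe_zero, ← hammingNorm_eq_zero,
      ← hammingNorm_comp_of_mem_shortening hσ hrange c.2]
    exact hammingNorm_eq_zero.2 hc
  rw [← LinearMap.finrank_range_of_inj hinj, LinearMap.range_comp, Submodule.range_subtype]

end Puncturing

def monLinearMap {n₁ n₂ : Type*} (e : n₁ ≃ n₂) (d : n₂ → Fˣ) :
    (n₁ → F) →ₗ[F] (n₂ → F) where
  toFun := monMap e d (RingEquiv.refl F)
  map_add' v w := by ext j; simp [monMap, mul_add]
  map_smul' a v := by ext j; simp [monMap, mul_left_comm]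

lemma codeEquivR_of_map_monLinearMap_eq {n₁ n₂ : Type*} {C₁ : Submodule F (n₁ → F)}
    {C₂ : Submodule F (n₂ → F)} (e : n₁ ≃ n₂) (d : n₂ → Fˣ)
    (h : C₁.map (monLinearMap e d) = C₂) : CodeEquivR C₁ C₂ :=
  ⟨e, d, RingEquiv.refl F, by rw [← h, Submodule.map_coe]; rfl⟩

lemma codeEquivR_rowSpan_extBlock {κ n : Type*} {k m r : ℕ} {G : Matrix κ n F} {j₀ : n}
    {e : Fin m ⊕ Fin r ≃ n} (he : ∀ t, e (.inr t) ∈ colClass G j₀)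
    {B : Matrix (Fin k) n F} (hB : rowSpan B = shortening (rowSpan G) j₀) {c₀ : n → F}
    (hc₀ : c₀ ∈ rowSpan G) (hc₀j₀ : c₀ j₀ = 1) :
    CodeEquivR (rowSpan G)
      (rowSpan (extBlock (r := r) (B.submatrix id (e ∘ Sum.inl)) (c₀ ∘ e ∘ Sum.inl))) := by
  choose u hu using fun t => exists_unit_apply_eq_of_mem_colClass (he t)
  have hB_mem : ∀ i, B i ∈ shortening (rowSpan G) j₀ := fun i => by
    rw [← hB]
    exact Submodule.subset_span ⟨i, rfl⟩
  refine codeEquivR_of_map_monLinearMap_eq e.symm (Sum.elim 1 fun t => (u t)⁻¹) ?_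
  rw [← shortening_sup_span_singleton hc₀ (by simp [hc₀j₀] : c₀ j₀ ≠ 0), ← hB,
    ← rowSpan_replicateRow, ← rowSpan_fromRows, rowSpan_map]
  congr 1
  ext (i | ⟨⟩) (j | t)
  · simp [extBlock, monLinearMap, monMap]
  · obtain ⟨hBi, hBij₀⟩ := mem_shortening.1 (hB_mem i)
    simp [extBlock, monLinearMap, monMap, hu t _ hBi, hBij₀]
  · simp [extBlock, monLinearMap, monMap]
  · simp [extBlock, monLinearMap, monMap, hu t _ hc₀, hc₀j₀]

theorem stmt9_general [DecidableEq F] {n' k' r : ℕ} (W : Set ℕ)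
    (C' : Submodule F (Fin n' → F)) (hdim : Module.finrank F C' = k')
    (heff : ∀ j, ∃ c ∈ C', c j ≠ 0)
    (hw : ∀ c ∈ C', c ≠ 0 → hammingNorm c ∈ W)
    (G' : Matrix (Fin k') (Fin n') F) (hG' : rowSpan G' = C')
    (hrlb : ∀ j, r ≤ colMult G' j) (hrex : ∃ j, colMult G' j = r) :
    ∃ (C : Submodule F (Fin (n' - r) → F))
      (Gres : Matrix (Fin (k' - 1)) (Fin (n' - r)) F) (aa : Fin (n' - r) → F),
      rowSpan Gres = C ∧
      Module.finrank F C = k' - 1 ∧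
      (∀ j, ∃ c ∈ C, c j ≠ 0) ∧
      (∀ c ∈ C, c ≠ 0 → hammingNorm c ∈ W) ∧
      (∀ j2, r ≤ colMult Gres j2) ∧
      CodeEquivR C' (rowSpan (extBlock (r := r) Gres aa)) := by
  subst hG'
  obtain ⟨j₀, hj₀⟩ := hrex
  obtain ⟨e, he_inl, he_inr⟩ := exists_sumEquiv_fin_of_card_eq (colClass G' j₀) hj₀
  set σ := e ∘ Sum.inl
  have hσ : Function.Injective σ := e.injective.comp Sum.inl_injective
  have hσ_class : ∀ j, σ j ∉ colClass G' j₀ := fun j => he_inl.subset ⟨j, rfl⟩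
  obtain ⟨c₁, hc₁, hc₁j₀⟩ := heff j₀
  have hK : Module.finrank F (shortening (rowSpan G') j₀) = k' - 1 := by
    have := finrank_shortening_add_one hc₁ hc₁j₀
    omega
  obtain ⟨B, hB⟩ := exists_rowSpan_eq_of_finrank_eq _ hK
  have hC : rowSpan (B.submatrix id σ) =
      (shortening (rowSpan G') j₀).map (LinearMap.funLeft F F σ) := by
    rw [rowSpan_submatrix, hB]
  refine ⟨_, B.submatrix id σ, ((c₁ j₀)⁻¹ • c₁) ∘ σ, rfl, ?_, fun j => ?_, ?_, fun j => ?_, ?_⟩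
  · rw [hC, finrank_map_funLeft_shortening hσ he_inl.ge, hK]
  · obtain ⟨c, hc, hcj⟩ := exists_mem_shortening_apply_ne_zero (hσ_class j) (heff (σ j))
    exact ⟨c ∘ σ, hC ▸ ⟨c, hc, rfl⟩, hcj⟩
  · rw [hC]
    rintro _ ⟨c, hc, rfl⟩ hne
    change hammingNorm (c ∘ σ) ∈ W
    rw [hammingNorm_comp_of_mem_shortening hσ he_inl.ge hc]
    exact hw c (mem_shortening.1 hc).1 (by rintro rfl; exact hne (map_zero _))
  · exact (hrlb _).trans (colMult_le_colMult_submatrix (hB.trans_le inf_le_left) hσ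
      ((colClass_subset_compl (hσ_class j)).trans he_inl.ge))
  · exact codeEquivR_rowSpan_extBlock he_inr hB (Submodule.smul_mem _ _ hc₁)
      (by simp [hc₁j₀])

/-- Corollary 7.  Let `C'` be an `[n',k',W]_q` code with minimum column multiplicity `r`.
Then there exists an `[n'-r, k'-1, W]_q` code `C` with minimum column multiplicity at
least `r` such that `C'` is equivalent to the code generated by `[[Ĝ, 0], [a, 1⋯1]]`,
where `Ĝ` is a generator matrix of `C` and the last block has `r` columns. -/
theorem stmt9 [Fintype F] [DecidableEq F] {n' k' r : ℕ} (W : Set ℕ)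
    (hW : ∀ w ∈ W, 1 ≤ w)
    (C' : Submodule F (Fin n' → F)) (hdim : Module.finrank F C' = k')
    (heff : ∀ j, ∃ c ∈ C', c j ≠ 0)
    (hw : ∀ c ∈ C', c ≠ 0 → hammingNorm c ∈ W)
    (G' : Matrix (Fin k') (Fin n') F) (hG' : rowSpan G' = C')
    (hrlb : ∀ j, r ≤ colMult G' j) (hrex : ∃ j, colMult G' j = r) :
    ∃ (C : Submodule F (Fin (n' - r) → F))
      (Gres : Matrix (Fin (k' - 1)) (Fin (n' - r)) F) (aa : Fin (n' - r) → F),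
      rowSpan Gres = C ∧
      Module.finrank F C = k' - 1 ∧
      (∀ j, ∃ c ∈ C, c j ≠ 0) ∧
      (∀ c ∈ C, c ≠ 0 → hammingNorm c ∈ W) ∧
      (∀ j2, r ≤ colMult Gres j2) ∧
      CodeEquivR C' (rowSpan (extBlock (r := r) Gres aa)) :=
  stmt9_general W C' hdim heff hw G' hG' hrlb hrex
end
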